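/- Let Ω ∈ 𝒮², let (m₁,m₂) ∈ (ℤ_{≥0})² \ {(0,0)}, let ε > 0, and set a := max_{p ∈ Ω} A_{m₁,m₂}(p). Then there exists Ω' ∈ 𝒮² which is concave (i.e. (ℝ_{>0})² \ Ω' is a convex subset of ℝ²) such that Ω ⊂ Ω' and Ω' ⊂ {p ∈ (ℝ_{≥0})² : A_{m₁,m₂}(p) ≤ a + ε}. -/

import Mathlib

open Set Real

noncomputable section

/-- Points of the plane `ℝ²`. -/
abbrev Pt : Type := ℝ × ℝ

/-- The unit quarter circle `Σ² = {v ∈ (ℝ_{≥0})² : |v| = 1}`. -/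
def Sigma2 : Set Pt := {v | 0 ≤ v.1 ∧ 0 ≤ v.2 ∧ v.1 ^ 2 + v.2 ^ 2 = 1}

/-- `Ω ∈ 𝒮²`, witnessed by the radial function `r` (a positive function on `Σ²`,
smooth in the sense that it is `C^∞` on `Σ²` as a subset of `ℝ²`). -/
def IsToricBase (Ω : Set Pt) (r : Pt → ℝ) : Prop :=
  ContDiffOn ℝ (⊤ : ℕ∞) r Sigma2 ∧ (∀ z ∈ Sigma2, 0 < r z) ∧
    Ω = {p | ∃ z ∈ Sigma2, ∃ t : ℝ, 0 ≤ t ∧ t ≤ r z ∧ p = t • z}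

/-- The open positive quadrant `(ℝ_{>0})²`. -/
def posQuad : Set Pt := {p | 0 < p.1 ∧ 0 < p.2}

/-- The closed nonnegative quadrant `(ℝ_{≥0})²`. -/
def nonnegQuad : Set Pt := {p | 0 ≤ p.1 ∧ 0 ≤ p.2}

/-- `U_Ω := (ℝ_{>0})² \ Ω`. -/
def UStar (Ω : Set Pt) : Set Pt := posQuad \ Ω

/-- `Ū_Ω`, the closure of `U_Ω` in `(ℝ_{≥0})²`. -/
def UBar (Ω : Set Pt) : Set Pt := closure (UStar Ω) ∩ nonnegQuad

/-- `A_{m₁,m₂}(y₁,y₂) = m₁ y₁ + m₂ y₂`. -/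
def Afun (m₁ m₂ : ℤ) (p : Pt) : ℝ := m₁ * p.1 + m₂ * p.2

/-- The curve `γ(θ) = ρ_Ω(θ)·(cos θ, sin θ)` parametrizing `∂Ω`. -/
def gammaCurve (r : Pt → ℝ) (θ : ℝ) : Pt :=
  r (Real.cos θ, Real.sin θ) • ((Real.cos θ, Real.sin θ) : Pt)

/-- `∂Ω := {ρ_Ω(θ)·(cos θ, sin θ) : θ ∈ [0,π/2]}`. -/
def bdryOmega (r : Pt → ℝ) : Set Pt := gammaCurve r '' Icc 0 (π / 2)

/-- `∂₊Ω := ∂Ω ∪ {(t,0) : t ≥ ρ_Ω(0)} ∪ {(0,t) : t ≥ ρ_Ω(π/2)}`. -/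
def bdryPlusOmega (r : Pt → ℝ) : Set Pt :=
  bdryOmega r ∪ {p | p.2 = 0 ∧ r (1, 0) ≤ p.1} ∪ {p | p.1 = 0 ∧ r (0, 1) ≤ p.2}

/-- The action spectrum `spec(Ω)`. -/
def spec (r : Pt → ℝ) : Set ℝ :=
  {x | ∃ m : ℤ, 1 ≤ m ∧ x = m * r (1, 0)} ∪
  {x | ∃ m : ℤ, 1 ≤ m ∧ x = m * r (0, 1)} ∪
  {x | ∃ m₁ m₂ : ℤ, ¬(m₁ ≤ 0 ∧ m₂ ≤ 0) ∧ ∃ θ ∈ Icc (0 : ℝ) (π / 2),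
    deriv (fun t => Afun m₁ m₂ (gammaCurve r t)) θ = 0 ∧
    0 < Afun m₁ m₂ (gammaCurve r θ) ∧ x = Afun m₁ m₂ (gammaCurve r θ)}

lemma sigma2_sum_ge (z : Pt) (hz : z ∈ Sigma2) : 1 ≤ z.1 + z.2 := by
  obtain ⟨h1, h2, h3⟩ := hz
  nlinarith [mul_nonneg h1 h2, sq_nonneg (z.1 + z.2)]

lemma sigma2_compact : IsCompact Sigma2 := by
  have hSclosed : IsClosed Sigma2 := by
    have : Sigma2 = {v : Pt | 0 ≤ v.1} ∩ ({v : Pt | 0 ≤ v.2} ∩ {v : Pt | v.1 ^ 2 + v.2 ^ 2 = 1}) := by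
      ext v; simp only [Sigma2, mem_setOf_eq, mem_inter_iff]
    rw [this]
    exact (isClosed_le continuous_const continuous_fst).inter
      ((isClosed_le continuous_const continuous_snd).inter
        (isClosed_eq (by fun_prop) continuous_const))
  have hSbdd : Bornology.IsBounded Sigma2 := by
    apply Bornology.IsBounded.subset (Metric.isBounded_closedBall (x := (0 : Pt)) (r := 1))
    intro v hv
    obtain ⟨h1, h2, h3⟩ := hv
    simp only [Metric.mem_closedBall, Prod.dist_eq, Real.dist_eq, max_le_iff, Prod.fst_zero,
      Prod.snd_zero, sub_zero]
    constructor <;> rw [abs_le] <;> constructor <;> nlinarith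
  exact Metric.isCompact_of_isClosed_isBounded hSclosed hSbdd

set_option maxHeartbeats 2000000

/-- for `Ω ∈ 𝒮²`, `(m₁,m₂) ∈ (ℤ_{≥0})² \ {(0,0)}`, `ε > 0` and
`a := max_{p ∈ Ω} A_{m₁,m₂}(p)`, there is a concave `Ω' ∈ 𝒮²` with `Ω ⊆ Ω'` and
`Ω' ⊆ {p ∈ (ℝ_{≥0})² : A_{m₁,m₂}(p) ≤ a + ε}`. -/
theorem stmt13 (Ω : Set Pt) (r : Pt → ℝ) (hΩ : IsToricBase Ω r)
    (m₁ m₂ : ℤ) (hm₁ : 0 ≤ m₁) (hm₂ : 0 ≤ m₂) (hm : ¬(m₁ = 0 ∧ m₂ = 0))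
    (ε : ℝ) (hε : 0 < ε) (a : ℝ) (ha : IsGreatest ((fun p => Afun m₁ m₂ p) '' Ω) a) :
    ∃ (Ω' : Set Pt) (r' : Pt → ℝ), IsToricBase Ω' r' ∧ Convex ℝ (UStar Ω') ∧
      Ω ⊆ Ω' ∧ Ω' ⊆ {p ∈ nonnegQuad | Afun m₁ m₂ p ≤ a + ε} := by
  obtain ⟨hr_smooth, hr_pos, hΩeq⟩ := hΩ
  have h10 : ((1, 0) : Pt) ∈ Sigma2 := by norm_num [Sigma2]
  have hm₁' : (0 : ℝ) ≤ (m₁ : ℝ) := by exact_mod_cast hm₁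
  have hm₂' : (0 : ℝ) ≤ (m₂ : ℝ) := by exact_mod_cast hm₂
  -- a bound M on Ω
  obtain ⟨z₀, hz₀, hz₀max⟩ := sigma2_compact.exists_isMaxOn ⟨(1, 0), h10⟩
    hr_smooth.continuousOn
  set M : ℝ := max (r z₀) 1 with hM
  have hM1 : (1 : ℝ) ≤ M := le_max_right _ _
  have hMpos : (0 : ℝ) < M := lt_of_lt_of_le one_pos hM1
  have hMr : ∀ z ∈ Sigma2, r z ≤ M := fun z hz => (hz₀max hz).trans (le_max_left _ _)
  set δ : ℝ := ε / (2 * M) with hδdef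
  have hδ : 0 < δ := div_pos hε (by linarith)
  have hδM : δ * (2 * M) = ε := div_mul_cancel₀ ε (by positivity)
  set c₁ : ℝ := (m₁ : ℝ) + δ with hc₁
  set c₂ : ℝ := (m₂ : ℝ) + δ with hc₂
  have hc₁pos : 0 < c₁ := by positivity
  have hc₂pos : 0 < c₂ := by positivity
  -- a ≥ 0
  have h0Ω : ((0, 0) : Pt) ∈ Ω := by
    rw [hΩeq]
    exact ⟨(1, 0), h10, 0, le_refl 0, (hr_pos _ h10).le, by simp⟩
  have ha0 : 0 ≤ a := by
    have := ha.2 ⟨(0, 0), h0Ω, rfl⟩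
    simpa [Afun] using this
  set b : ℝ := a + ε with hb
  have hbpos : 0 < b := by positivity
  set r' : Pt → ℝ := fun p => b / (c₁ * p.1 + c₂ * p.2) with hr'
  have hden : ∀ z ∈ Sigma2, 0 < c₁ * z.1 + c₂ * z.2 := by
    intro z hz
    have hsum := sigma2_sum_ge z hz
    obtain ⟨h1, h2, _⟩ := hz
    nlinarith [mul_nonneg hm₁' h1, mul_nonneg hm₂' h2]
  set Ω' : Set Pt := {p | ∃ z ∈ Sigma2, ∃ t : ℝ, 0 ≤ t ∧ t ≤ r' z ∧ p = t • z} with hΩ'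
  set S : Set Pt := {p | 0 ≤ p.1 ∧ 0 ≤ p.2 ∧ c₁ * p.1 + c₂ * p.2 ≤ b} with hS
  have hΩ'S : Ω' = S := by
    ext p
    constructor
    · rintro ⟨z, hz, t, ht0, htr, rfl⟩
      have hd := hden z hz
      obtain ⟨hz1, hz2, hzs⟩ := hz
      have hf : (t • z).1 = t * z.1 := rfl
      have hs : (t • z).2 = t * z.2 := rfl
      refine ⟨by rw [hf]; exact mul_nonneg ht0 hz1, by rw [hs]; exact mul_nonneg ht0 hz2, ?_⟩
      rw [hf, hs]
      have := (le_div_iff₀ hd).mp htr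
      nlinarith
    · rintro ⟨h1, h2, h3⟩
      by_cases hp0 : p.1 = 0 ∧ p.2 = 0
      · refine ⟨(1, 0), h10, 0, le_refl 0, (div_pos hbpos (hden _ h10)).le, ?_⟩
        simp [Prod.ext_iff, hp0.1, hp0.2]
      · have hs2 : 0 < p.1 ^ 2 + p.2 ^ 2 := by
          rcases (not_and_or.mp hp0) with h | h
          · have : 0 < p.1 := lt_of_le_of_ne h1 (Ne.symm h)
            positivity
          · have : 0 < p.2 := lt_of_le_of_ne h2 (Ne.symm h)
            positivity
        set s : ℝ := Real.sqrt (p.1 ^ 2 + p.2 ^ 2) with hsdef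
        have hspos : 0 < s := Real.sqrt_pos.mpr hs2
        have hzSig : ((p.1 / s, p.2 / s) : Pt) ∈ Sigma2 := by
          refine ⟨div_nonneg h1 hspos.le, div_nonneg h2 hspos.le, ?_⟩
          rw [div_pow, div_pow, ← add_div, Real.sq_sqrt hs2.le, div_self hs2.ne']
        have hcp : 0 < c₁ * p.1 + c₂ * p.2 := by
          rcases (not_and_or.mp hp0) with h | h
          · have : 0 < p.1 := lt_of_le_of_ne h1 (Ne.symm h)
            nlinarith [mul_nonneg hc₂pos.le h2]
          · have : 0 < p.2 := lt_of_le_of_ne h2 (Ne.symm h)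
            nlinarith [mul_nonneg hc₁pos.le h1]
        refine ⟨(p.1 / s, p.2 / s), hzSig, s, hspos.le, ?_, ?_⟩
        · show s ≤ b / (c₁ * (p.1 / s) + c₂ * (p.2 / s))
          have heq : c₁ * (p.1 / s) + c₂ * (p.2 / s) = (c₁ * p.1 + c₂ * p.2) / s := by
            field_simp
          rw [heq, le_div_iff₀ (div_pos hcp hspos)]
          have : s * ((c₁ * p.1 + c₂ * p.2) / s) = c₁ * p.1 + c₂ * p.2 := by
            field_simp
          rw [this]; exact h3
        · have e1 : s * (p.1 / s) = p.1 := by field_simp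
          have e2 : s * (p.2 / s) = p.2 := by field_simp
          simp only [Prod.ext_iff, Prod.smul_mk, smul_eq_mul]
          exact ⟨e1.symm, e2.symm⟩
  refine ⟨Ω', r', ⟨?_, ?_, rfl⟩, ?_, ?_, ?_⟩
  · -- smoothness
    exact ContDiffOn.div contDiffOn_const
      (((contDiff_const.mul contDiff_fst).add (contDiff_const.mul contDiff_snd)).contDiffOn)
      (fun z hz => (hden z hz).ne')
  · exact fun z hz => div_pos hbpos (hden z hz)
  · -- convexity of UStar Ω'
    have : UStar Ω' = ({p : Pt | 0 < p.1} ∩ {p : Pt | 0 < p.2}) ∩ {p : Pt | b < c₁ * p.1 + c₂ * p.2} := by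
      rw [UStar, hΩ'S]
      ext p
      simp only [hS, posQuad, mem_diff, mem_setOf_eq, mem_inter_iff]
      constructor
      · rintro ⟨⟨hp1, hp2⟩, hns⟩
        push_neg at hns
        exact ⟨⟨hp1, hp2⟩, hns hp1.le hp2.le⟩
      · rintro ⟨⟨hp1, hp2⟩, hgt⟩
        exact ⟨⟨hp1, hp2⟩, fun h => absurd h.2.2 (not_le.mpr hgt)⟩
    rw [this]
    have lin : IsLinearMap ℝ (fun p : Pt => c₁ * p.1 + c₂ * p.2) := by
      constructor
      · intro x y; simp [Prod.fst_add, Prod.snd_add]; ring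
      · intro c x; simp [smul_eq_mul]; ring
    have lin1 : IsLinearMap ℝ (fun p : Pt => p.1) := ⟨fun x y => rfl, fun c x => rfl⟩
    have lin2 : IsLinearMap ℝ (fun p : Pt => p.2) := ⟨fun x y => rfl, fun c x => rfl⟩
    exact ((convex_halfSpace_gt lin1 0).inter (convex_halfSpace_gt lin2 0)).inter
      (convex_halfSpace_gt lin b)
  · -- Ω ⊆ Ω'
    intro p hp
    have hA : Afun m₁ m₂ p ≤ a := ha.2 ⟨p, hp, rfl⟩
    rw [hΩeq] at hp
    obtain ⟨z, hz, t, ht0, htr, rfl⟩ := hp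
    obtain ⟨hz1, hz2, hzs⟩ := hz
    have hz1' : z.1 ≤ 1 := by nlinarith
    have hz2' : z.2 ≤ 1 := by nlinarith
    have htM : t ≤ M := htr.trans (hMr z ⟨hz1, hz2, hzs⟩)
    have hf : (t • z).1 = t * z.1 := rfl
    have hsn : (t • z).2 = t * z.2 := rfl
    have hp1M : (t • z).1 ≤ M := by rw [hf]; nlinarith
    have hp2M : (t • z).2 ≤ M := by rw [hsn]; nlinarith
    have hp1 : 0 ≤ (t • z).1 := by rw [hf]; exact mul_nonneg ht0 hz1
    have hp2 : 0 ≤ (t • z).2 := by rw [hsn]; exact mul_nonneg ht0 hz2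
    rw [hΩ'S]
    refine ⟨hp1, hp2, ?_⟩
    simp only [Afun] at hA
    have h1 : δ * (t • z).1 ≤ δ * M := mul_le_mul_of_nonneg_left hp1M hδ.le
    have h2 : δ * (t • z).2 ≤ δ * M := mul_le_mul_of_nonneg_left hp2M hδ.le
    simp only [hc₁, hc₂, hb]
    nlinarith
  · -- Ω' ⊆ target
    rw [hΩ'S]
    rintro p ⟨h1, h2, h3⟩
    refine ⟨⟨h1, h2⟩, ?_⟩
    simp only [Afun]
    have h4 : (m₁ : ℝ) * p.1 ≤ c₁ * p.1 := by nlinarith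
    have h5 : (m₂ : ℝ) * p.2 ≤ c₂ * p.2 := by nlinarith
    linarith


end
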